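/- Let U₁,…,U_n be unitaries on ℂ^d and suppose for all traceless d×d matrices Y with ‖Y‖₂ = √d one has ‖(1/n)Σᵢ UᵢYUᵢ* − T^{(1)}(Y)‖_∞ ≤ ε (where T^{(1)}(Y) = (Tr Y/d)·1 = 0 for traceless Y). Then for any unit vector |ψ'⟩ = (Y ⊗ 1)|ψ⟩ orthogonal to the maximally entangled state |ψ⟩, the operator Δ(|ψ⟩⟨ψ'|) = (1/n)Σᵢ (Uᵢ ⊗ Ūᵢ)|ψ⟩⟨ψ'|(Uᵢ* ⊗ Ūᵢ^T) − T^{(1,1)}(|ψ⟩⟨ψ'|) satisfies ‖Δ(|ψ⟩⟨ψ'|)‖₁ ≤ ε. -/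

import Mathlib

open Matrix Kronecker MeasureTheory
open scoped ComplexOrder

noncomputable def psi (d : ℕ) : Fin d × Fin d → ℂ :=
  fun p => (1 / Real.sqrt d) * (if p.1 = p.2 then 1 else 0)

/-- The trace (Schatten-1) norm of a complex matrix. -/
noncomputable def traceNorm {m : Type*} [Fintype m] [DecidableEq m]
    (A : Matrix m m ℂ) : ℝ :=
  (((Matrix.posSemidef_conjTranspose_mul_self A).1.eigenvectorUnitary.1 *
    diagonal (((↑) : ℝ → ℂ) ∘ (√·) ∘ (Matrix.posSemidef_conjTranspose_mul_self A).1.eigenvalues) *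
    (star (Matrix.posSemidef_conjTranspose_mul_self A).1.eigenvectorUnitary :
      Matrix m m ℂ)).trace).re

/-- The operator (spectral) norm of a complex matrix. -/
noncomputable def opNorm {m : Type*} [Fintype m] [DecidableEq m]
    (A : Matrix m m ℂ) : ℝ :=
  ‖Matrix.toEuclideanCLM (𝕜 := ℂ) A‖

/-- The `U ⊗ Ū`-twirl of `X` with respect to a measure `μ` on the unitary group,
defined entrywise by Bochner integrals. -/
noncomputable def twirl11 (d : ℕ) [MeasurableSpace (Matrix.unitaryGroup (Fin d) ℂ)]
    (μ : Measure (Matrix.unitaryGroup (Fin d) ℂ))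
    (X : Matrix (Fin d × Fin d) (Fin d × Fin d) ℂ) :
    Matrix (Fin d × Fin d) (Fin d × Fin d) ℂ :=
  Matrix.of fun p q =>
    ∫ U : Matrix.unitaryGroup (Fin d) ℂ,
      (((U : Matrix (Fin d) (Fin d) ℂ) ⊗ₖ (U : Matrix (Fin d) (Fin d) ℂ).map star) * X *
        ((U : Matrix (Fin d) (Fin d) ℂ)ᴴ ⊗ₖ ((U : Matrix (Fin d) (Fin d) ℂ).map star)ᴴ)) p q ∂μ

/-!
Left invariance of `μ` makes `T⁽¹⁾(Y) = ∫ U Y Uᴴ dμ` commute with every unitary, so it is the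
scalar `(tr Y / d) • 1`. Since `(U ⊗ Ū)ψ = ψ` and `(U ⊗ Ū)(Y ⊗ 1)ψ = (U Y Uᴴ ⊗ 1)ψ`, both the
sampled and the Haar `U ⊗ Ū`-twirl of `|ψ⟩⟨(Y ⊗ 1)ψ|` are of the form `|ψ⟩⟨(A ⊗ 1)ψ|`, with `A`
the corresponding twirl of `Y`. The hypotheses on `ψ' = (Y ⊗ 1)ψ` say `tr Y = 0` and
`‖Y‖₂ = √d`, so the Haar part vanishes and `Δ = |ψ⟩⟨(A ⊗ 1)ψ|` with `A` the sampled average,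
whose trace norm is `‖(A ⊗ 1)ψ‖ = ‖A‖₂ / √d ≤ ‖A‖_∞ ≤ ε`.
-/

theorem Matrix.star_dotProduct_self_eq_sum_norm_sq {m : Type*} [Fintype m] (v : m → ℂ) :
    star v ⬝ᵥ v = ((∑ i, ‖v i‖ ^ 2 : ℝ) : ℂ) := by
  simp [dotProduct, Complex.conj_mul']

theorem Matrix.trace_conjTranspose_mul_self_eq_sum_norm_sq {m : Type*} [Fintype m]
    (A : Matrix m m ℂ) : (Aᴴ * A).trace = ((∑ i, ∑ j, ‖A i j‖ ^ 2 : ℝ) : ℂ) := by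
  rw [Finset.sum_comm]
  simp [trace, mul_apply, Complex.conj_mul']

theorem Matrix.mul_mul_conjTranspose_apply {m : Type*} [Fintype m] (V M : Matrix m m ℂ)
    (i j : m) : (V * M * Vᴴ) i j = ∑ k, ∑ l, V i k * star (V j l) * M k l := by
  simp only [mul_apply, conjTranspose_apply, Finset.sum_mul]
  rw [Finset.sum_comm]
  exact Finset.sum_congr rfl fun k _ => Finset.sum_congr rfl fun l _ => by ring

open scoped Matrix.Norms.L2Operator in
theorem sum_sum_norm_sq_le_card_mul_opNorm_sq {m : Type*} [Fintype m] [DecidableEq m]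
    (A : Matrix m m ℂ) : ∑ i, ∑ j, ‖A i j‖ ^ 2 ≤ Fintype.card m * opNorm A ^ 2 := by
  have hcol (j : m) : ∑ i, ‖A i j‖ ^ 2 ≤ opNorm A ^ 2 := by
    have h := A.l2_opNorm_mulVec (EuclideanSpace.single j 1)
    rw [PiLp.norm_single, norm_one, mul_one] at h
    have hnorm : ‖(EuclideanSpace.equiv m ℂ).symm (A *ᵥ EuclideanSpace.single j 1)‖ ^ 2 =
        ∑ i, ‖A i j‖ ^ 2 := by
      simp [EuclideanSpace.norm_sq_eq, mulVec_single]
    exact hnorm ▸ pow_le_pow_left₀ (norm_nonneg _) h 2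
  rw [Finset.sum_comm]
  simpa using Finset.sum_le_sum fun j (_ : j ∈ Finset.univ) => hcol j

theorem Matrix.eq_smul_one_of_unitary_conj_eq {m 𝕜 : Type*} [Fintype m] [DecidableEq m]
    [RCLike 𝕜] {B : Matrix m m 𝕜} (h : ∀ V ∈ unitaryGroup m 𝕜, V * B * Vᴴ = B) :
    B = (B.trace / Fintype.card m) • 1 := by
  have hperm (σ : Equiv.Perm m) (i : m) : B (σ i) (σ i) = B i i := by
    have hσ : σ.permMatrix 𝕜 ∈ unitaryGroup m 𝕜 := by
      rw [mem_unitaryGroup_iff, star_eq_conjTranspose, conjTranspose_permMatrix,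
        ← permMatrix_mul, inv_mul_cancel, permMatrix_one]
    have := congrFun (congrFun (h _ hσ) i) i
    rwa [conjTranspose_permMatrix, PEquiv.toMatrix_toPEquiv_mul,
      PEquiv.mul_toMatrix_toPEquiv] at this
  have hoff (i j : m) (hij : i ≠ j) : B i j = 0 := by
    set v : m → 𝕜 := fun k => if k = i then -1 else 1
    have hv : diagonal v ∈ unitaryGroup m 𝕜 := by
      rw [mem_unitaryGroup_iff, star_eq_conjTranspose, diagonal_conjTranspose,
        diagonal_mul_diagonal, ← diagonal_one]
      congr 1
      ext k
      by_cases hk : k = i <;> simp [v, hk]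
    have := congrFun (congrFun (h _ hv) i) j
    rw [diagonal_conjTranspose, mul_diagonal, diagonal_mul] at this
    simp only [v, Pi.star_apply, if_pos rfl, if_neg hij.symm, star_one] at this
    linear_combination (-(1 : 𝕜) / 2) * this
  ext i j
  rcases eq_or_ne i j with rfl | hij
  · have htrace : B.trace = Fintype.card m * B i i := by
      rw [trace, ← nsmul_eq_mul, ← Finset.card_univ, ← Finset.sum_const]
      exact Finset.sum_congr rfl fun k _ => by
        simpa using (hperm (Equiv.swap k i) k).symm
    have hcard : (Fintype.card m : 𝕜) ≠ 0 :=
      Nat.cast_ne_zero.mpr (Fintype.card_pos_iff.mpr ⟨i⟩).ne'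
    simp [htrace, hcard]
  · simp [hoff i j hij, hij]

open scoped MatrixOrder in
theorem traceNorm_eq_re_trace_of_mul_self_eq {m : Type*} [Fintype m] [DecidableEq m]
    {A S : Matrix m m ℂ} (hS : S.PosSemidef) (hSS : S * S = Aᴴ * A) :
    traceNorm A = S.trace.re := by
  have hA := Matrix.posSemidef_conjTranspose_mul_self A
  -- `traceNorm` is the trace of `cfc √ (Aᴴ * A)` written out through the eigendecomposition
  have h1 : traceNorm A = (cfc Real.sqrt (Aᴴ * A)).trace.re := by
    rw [hA.1.cfc_eq, Matrix.IsHermitian.cfc, Unitary.conjStarAlgAut_apply]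
    rfl
  rw [h1, ← cfcₙ_eq_cfc (hf0 := Real.sqrt_zero), ← CFC.sqrt_eq_real_sqrt _ hA.nonneg,
    CFC.sqrt_unique hSS hS.nonneg]

theorem traceNorm_vecMulVec_star {m : Type*} [Fintype m] [DecidableEq m] {x : m → ℂ}
    (hx : ∑ i, ‖x i‖ ^ 2 = 1) (z : m → ℂ) :
    traceNorm (vecMulVec x (star z)) = √(∑ i, ‖z i‖ ^ 2) := by
  set s := ∑ i, ‖z i‖ ^ 2
  -- `|x⟩⟨z|` has absolute value `|z⟩⟨z| / ‖z‖`
  set S : Matrix m m ℂ := ((√s)⁻¹ : ℂ) • vecMulVec z (star z)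
  have hS : S.PosSemidef :=
    (posSemidef_vecMulVec_self_star z).smul (by positivity)
  have hSS : S * S = (vecMulVec x (star z))ᴴ * vecMulVec x (star z) := by
    rcases eq_or_ne s 0 with hs | hs
    · have hz : z = 0 := by
        rw [← dotProduct_star_self_eq_zero, star_dotProduct_self_eq_sum_norm_sq]
        exact_mod_cast hs
      simp [S, hz]
    rw [conjTranspose_vecMulVec, star_star, vecMulVec_mul_vecMulVec, smul_mul_smul_comm,
      vecMulVec_mul_vecMulVec, star_dotProduct_self_eq_sum_norm_sq,
      star_dotProduct_self_eq_sum_norm_sq, hx]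
    have hscal : (√s)⁻¹ * (√s)⁻¹ * s = 1 := by
      rw [← mul_inv, Real.mul_self_sqrt (by positivity), inv_mul_cancel₀ hs]
    rw [vecMulVec_smul, smul_smul, Complex.ofReal_one, one_smul]
    change ((√s : ℂ)⁻¹ * (√s : ℂ)⁻¹ * (s : ℂ)) • _ = _
    rw [← Complex.ofReal_inv, ← Complex.ofReal_mul, ← Complex.ofReal_mul, hscal,
      Complex.ofReal_one, one_smul]
  rw [traceNorm_eq_re_trace_of_mul_self_eq hS hSS]
  rw [trace_smul, trace_vecMulVec, dotProduct_comm, star_dotProduct_self_eq_sum_norm_sq]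
  change ((√s : ℂ)⁻¹ * (s : ℂ)).re = √s
  rw [← Complex.ofReal_inv, ← Complex.ofReal_mul, Complex.ofReal_re, inv_mul_eq_div,
    Real.div_sqrt]

section UnitaryTwirl

variable {m : Type*} [Fintype m] [DecidableEq m]

theorem norm_unitary_conj_apply_le (U : unitaryGroup m ℂ) (Y : Matrix m m ℂ) (i j : m) :
    ‖((U : Matrix m m ℂ) * Y * (U : Matrix m m ℂ)ᴴ) i j‖ ≤ ∑ k, ∑ l, ‖Y k l‖ := by
  rw [mul_mul_conjTranspose_apply]
  refine (norm_sum_le _ _).trans <| Finset.sum_le_sum fun k _ =>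
    (norm_sum_le _ _).trans <| Finset.sum_le_sum fun l _ => ?_
  rw [norm_mul, norm_mul, norm_star]
  have hik := entry_norm_bound_of_unitary U.2 i k
  have hjl := entry_norm_bound_of_unitary U.2 j l
  calc _ ≤ 1 * 1 * ‖Y k l‖ := by gcongr
    _ = ‖Y k l‖ := by ring

theorem continuous_unitary_conj_apply (Y : Matrix m m ℂ) (i j : m) :
    Continuous fun U : unitaryGroup m ℂ => ((U : Matrix m m ℂ) * Y * (U : Matrix m m ℂ)ᴴ) i j :=
  ((continuous_subtype_val.matrix_mul continuous_const).matrix_mul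
    continuous_subtype_val.matrix_conjTranspose).matrix_elem i j

variable [MeasurableSpace (unitaryGroup m ℂ)]

noncomputable def unitaryTwirl (μ : Measure (unitaryGroup m ℂ)) (Y : Matrix m m ℂ) :
    Matrix m m ℂ :=
  of fun i j => ∫ U : unitaryGroup m ℂ, ((U : Matrix m m ℂ) * Y * (U : Matrix m m ℂ)ᴴ) i j ∂μ

variable [BorelSpace (unitaryGroup m ℂ)] (μ : Measure (unitaryGroup m ℂ))

theorem integrable_unitary_conj_apply [IsFiniteMeasure μ] (Y : Matrix m m ℂ) (i j : m) :
    Integrable (fun U : unitaryGroup m ℂ => ((U : Matrix m m ℂ) * Y * (U : Matrix m m ℂ)ᴴ) i j)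
      μ :=
  .of_bound (continuous_unitary_conj_apply Y i j).aestronglyMeasurable _
    (.of_forall fun U => norm_unitary_conj_apply_le U Y i j)

theorem unitary_conj_unitaryTwirl [IsFiniteMeasure μ]
    (hinv : ∀ V : unitaryGroup m ℂ, μ.map (fun U => V * U) = μ) (V : unitaryGroup m ℂ)
    (Y : Matrix m m ℂ) :
    (V : Matrix m m ℂ) * unitaryTwirl μ Y * (V : Matrix m m ℂ)ᴴ = unitaryTwirl μ Y := by
  ext i j
  have hint (k l : m) := (integrable_unitary_conj_apply μ Y k l).const_mul (V i k * star (V j l))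
  calc _ = ∫ U : unitaryGroup m ℂ,
        ((V : Matrix m m ℂ) * ((U : Matrix m m ℂ) * Y * (U : Matrix m m ℂ)ᴴ) *
          (V : Matrix m m ℂ)ᴴ) i j ∂μ := by
        simp only [mul_mul_conjTranspose_apply (V : Matrix m m ℂ), unitaryTwirl, of_apply]
        rw [integral_finsetSum _ fun k _ => integrable_finsetSum _ fun l _ => hint k l]
        refine Finset.sum_congr rfl fun k _ => ?_
        rw [integral_finsetSum _ fun l _ => hint k l]
        simp only [integral_const_mul]
    _ = ∫ U : unitaryGroup m ℂ,
        (((V * U : unitaryGroup m ℂ) : Matrix m m ℂ) * Y *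
          ((V * U : unitaryGroup m ℂ) : Matrix m m ℂ)ᴴ) i j ∂μ := by
        simp only [Submonoid.coe_mul, conjTranspose_mul, Matrix.mul_assoc]
    _ = ∫ U : unitaryGroup m ℂ, ((U : Matrix m m ℂ) * Y * (U : Matrix m m ℂ)ᴴ) i j
          ∂(μ.map fun U => V * U) :=
        (integral_map (continuous_const_mul V).measurable.aemeasurable
          (continuous_unitary_conj_apply Y i j).aestronglyMeasurable).symm
    _ = unitaryTwirl μ Y i j := by rw [hinv V]; rfl

theorem trace_unitaryTwirl [IsProbabilityMeasure μ] (Y : Matrix m m ℂ) :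
    (unitaryTwirl μ Y).trace = Y.trace := by
  calc (unitaryTwirl μ Y).trace
      = ∫ U : unitaryGroup m ℂ, ((U : Matrix m m ℂ) * Y * (U : Matrix m m ℂ)ᴴ).trace ∂μ :=
        (integral_finsetSum _ fun i _ => integrable_unitary_conj_apply μ Y i i).symm
    _ = Y.trace := by
        simp [trace_mul_cycle _ Y, ← star_eq_conjTranspose]

theorem unitaryTwirl_eq [IsProbabilityMeasure μ]
    (hinv : ∀ V : unitaryGroup m ℂ, μ.map (fun U => V * U) = μ) (Y : Matrix m m ℂ) :
    unitaryTwirl μ Y = (Y.trace / Fintype.card m) • 1 := by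
  rw [eq_smul_one_of_unitary_conj_eq fun V hV => unitary_conj_unitaryTwirl μ hinv ⟨V, hV⟩ Y,
    trace_unitaryTwirl]

end UnitaryTwirl

section MaximallyEntangled

variable {d : ℕ}

theorem psi_eq_smul_vec_one : psi d = (√d)⁻¹ • vec (1 : Matrix (Fin d) (Fin d) ℂ) := by
  ext p
  simp [psi, one_apply, eq_comm]

theorem kronecker_mulVec_psi (A B : Matrix (Fin d) (Fin d) ℂ) :
    (A ⊗ₖ B) *ᵥ psi d = (√d)⁻¹ • vec (B * Aᵀ) := by
  rw [psi_eq_smul_vec_one, mulVec_smul, kronecker_mulVec_vec, Matrix.mul_one]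

theorem kronecker_one_mulVec_psi_apply (Y : Matrix (Fin d) (Fin d) ℂ) (p : Fin d × Fin d) :
    ((Y ⊗ₖ (1 : Matrix (Fin d) (Fin d) ℂ)) *ᵥ psi d) p = (√d)⁻¹ • Y p.1 p.2 := by
  simp [kronecker_mulVec_psi]

theorem star_psi_dotProduct_kronecker_one_mulVec_psi (Y : Matrix (Fin d) (Fin d) ℂ) :
    star (psi d) ⬝ᵥ ((Y ⊗ₖ (1 : Matrix (Fin d) (Fin d) ℂ)) *ᵥ psi d) = (d : ℂ)⁻¹ * Y.trace := by
  rw [kronecker_mulVec_psi, psi_eq_smul_vec_one, star_smul, star_trivial, smul_dotProduct,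
    dotProduct_smul, star_vec_dotProduct_vec, smul_smul, ← mul_inv,
    Real.mul_self_sqrt (Nat.cast_nonneg d), conjTranspose_one, Matrix.one_mul, Matrix.one_mul,
    trace_transpose, Complex.real_smul]
  push_cast
  rfl

theorem sum_norm_sq_kronecker_one_mulVec_psi (Y : Matrix (Fin d) (Fin d) ℂ) :
    ∑ p, ‖((Y ⊗ₖ (1 : Matrix (Fin d) (Fin d) ℂ)) *ᵥ psi d) p‖ ^ 2 =
      (d : ℝ)⁻¹ * ∑ i, ∑ j, ‖Y i j‖ ^ 2 := by
  simp [kronecker_one_mulVec_psi_apply, Fintype.sum_prod_type, mul_pow, Finset.mul_sum]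

theorem sum_norm_sq_psi (hd : d ≠ 0) : ∑ p, ‖psi d p‖ ^ 2 = 1 := by
  simpa [one_apply, apply_ite, hd] using
    sum_norm_sq_kronecker_one_mulVec_psi (1 : Matrix (Fin d) (Fin d) ℂ)

theorem kronecker_map_star_mulVec_psi (U : unitaryGroup (Fin d) ℂ) :
    ((U : Matrix (Fin d) (Fin d) ℂ) ⊗ₖ (U : Matrix (Fin d) (Fin d) ℂ).map star) *ᵥ psi d =
      psi d := by
  have hUU : (U : Matrix (Fin d) (Fin d) ℂ).map star * (U : Matrix (Fin d) (Fin d) ℂ)ᵀ = 1 := by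
    rw [← transpose_transpose ((U : Matrix (Fin d) (Fin d) ℂ).map star), ← transpose_mul,
      ← transpose_map, ← conjTranspose, ← star_eq_conjTranspose, mem_unitaryGroup_iff.mp U.2,
      transpose_one]
  rw [kronecker_mulVec_psi, psi_eq_smul_vec_one, hUU]

theorem kronecker_map_star_conj_vecMulVec_psi (U : unitaryGroup (Fin d) ℂ)
    (Y : Matrix (Fin d) (Fin d) ℂ) :
    ((U : Matrix (Fin d) (Fin d) ℂ) ⊗ₖ (U : Matrix (Fin d) (Fin d) ℂ).map star) *
        vecMulVec (psi d) (star ((Y ⊗ₖ (1 : Matrix (Fin d) (Fin d) ℂ)) *ᵥ psi d)) *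
        ((U : Matrix (Fin d) (Fin d) ℂ)ᴴ ⊗ₖ ((U : Matrix (Fin d) (Fin d) ℂ).map star)ᴴ) =
      vecMulVec (psi d) (star ((((U : Matrix (Fin d) (Fin d) ℂ) * Y *
        (U : Matrix (Fin d) (Fin d) ℂ)ᴴ) ⊗ₖ (1 : Matrix (Fin d) (Fin d) ℂ)) *ᵥ psi d)) := by
  rw [← conjTranspose_kronecker, mul_vecMulVec, vecMulVec_mul, kronecker_map_star_mulVec_psi,
    ← star_mulVec, mulVec_mulVec, ← mul_kronecker_mul, kronecker_mulVec_psi, kronecker_mulVec_psi]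
  simp [transpose_mul, Matrix.mul_assoc, conjTranspose, transpose_map]

theorem twirl11_vecMulVec_psi [MeasurableSpace (unitaryGroup (Fin d) ℂ)]
    (μ : Measure (unitaryGroup (Fin d) ℂ)) (Y : Matrix (Fin d) (Fin d) ℂ) :
    twirl11 d μ (vecMulVec (psi d) (star ((Y ⊗ₖ (1 : Matrix (Fin d) (Fin d) ℂ)) *ᵥ psi d))) =
      vecMulVec (psi d)
        (star ((unitaryTwirl μ Y ⊗ₖ (1 : Matrix (Fin d) (Fin d) ℂ)) *ᵥ psi d)) := by
  ext p q
  simp only [twirl11, of_apply, kronecker_map_star_conj_vecMulVec_psi, vecMulVec_apply,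
    Pi.star_apply, kronecker_one_mulVec_psi_apply, unitaryTwirl, star_smul, star_trivial]
  simp only [integral_const_mul, integral_smul, Complex.star_def, integral_conj]

theorem smul_sum_kronecker_map_star_conj_vecMulVec_psi {n : ℕ}
    (U : Fin n → unitaryGroup (Fin d) ℂ) (Y : Matrix (Fin d) (Fin d) ℂ) :
    (n : ℂ)⁻¹ • ∑ i,
        ((U i : Matrix (Fin d) (Fin d) ℂ) ⊗ₖ (U i : Matrix (Fin d) (Fin d) ℂ).map star) *
          vecMulVec (psi d) (star ((Y ⊗ₖ (1 : Matrix (Fin d) (Fin d) ℂ)) *ᵥ psi d)) *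
          ((U i : Matrix (Fin d) (Fin d) ℂ)ᴴ ⊗ₖ ((U i : Matrix (Fin d) (Fin d) ℂ).map star)ᴴ) =
      vecMulVec (psi d) (star ((((n : ℂ)⁻¹ • ∑ i, (U i : Matrix (Fin d) (Fin d) ℂ) * Y *
        (U i : Matrix (Fin d) (Fin d) ℂ)ᴴ) ⊗ₖ (1 : Matrix (Fin d) (Fin d) ℂ)) *ᵥ psi d)) := by
  simp only [kronecker_map_star_conj_vecMulVec_psi]
  ext p q
  simp [vecMulVec_apply, kronecker_one_mulVec_psi_apply, Finset.mul_sum, Matrix.sum_apply]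
  exact Finset.sum_congr rfl fun i _ => by ring

theorem traceNorm_vecMulVec_psi_le (hd : d ≠ 0) (A : Matrix (Fin d) (Fin d) ℂ) :
    traceNorm (vecMulVec (psi d) (star ((A ⊗ₖ (1 : Matrix (Fin d) (Fin d) ℂ)) *ᵥ psi d))) ≤
      opNorm A := by
  rw [traceNorm_vecMulVec_star (sum_norm_sq_psi hd), sum_norm_sq_kronecker_one_mulVec_psi]
  refine Real.sqrt_le_iff.mpr ⟨norm_nonneg _, ?_⟩
  calc (d : ℝ)⁻¹ * ∑ i, ∑ j, ‖A i j‖ ^ 2 ≤ (d : ℝ)⁻¹ * (d * opNorm A ^ 2) := by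
        gcongr
        simpa using sum_sum_norm_sq_le_card_mul_opNorm_sq A
    _ = opNorm A ^ 2 := by field_simp

end MaximallyEntangled

theorem stmt_13_general (d n : ℕ) (ε : ℝ)
    [MeasurableSpace (Matrix.unitaryGroup (Fin d) ℂ)]
    [BorelSpace (Matrix.unitaryGroup (Fin d) ℂ)]
    -- μ is the Haar (i.e. the invariant probability) measure on U(d):
    (μ : Measure (Matrix.unitaryGroup (Fin d) ℂ)) [IsProbabilityMeasure μ]
    (hinv : ∀ V : Matrix.unitaryGroup (Fin d) ℂ, Measure.map (fun U => V * U) μ = μ)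
    (U : Fin n → Matrix.unitaryGroup (Fin d) ℂ)
    -- the sampled unitaries approximate the `T^{(1)}` twirl on traceless
    -- matrices `Y` with `‖Y‖₂ = √d` (where `T^{(1)}(Y) = (Tr Y / d)·1 = 0`):
    (happrox : ∀ Y : Matrix (Fin d) (Fin d) ℂ, Y.trace = 0 → (Yᴴ * Y).trace = (d : ℂ) →
      opNorm ((n : ℂ)⁻¹ • ∑ i, (U i : Matrix (Fin d) (Fin d) ℂ) * Y *
        (U i : Matrix (Fin d) (Fin d) ℂ)ᴴ) ≤ ε) :
    -- then for any unit vector `ψ' = (Y ⊗ 1)ψ` orthogonal to `ψ`: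
    ∀ Y : Matrix (Fin d) (Fin d) ℂ,
      (∑ p, ‖(Y ⊗ₖ (1 : Matrix (Fin d) (Fin d) ℂ)).mulVec (psi d) p‖ ^ 2 = 1) →
      (star (psi d)) ⬝ᵥ (Y ⊗ₖ (1 : Matrix (Fin d) (Fin d) ℂ)).mulVec (psi d) = 0 →
      traceNorm
        ((n : ℂ)⁻¹ • ∑ i,
            ((U i : Matrix (Fin d) (Fin d) ℂ) ⊗ₖ (U i : Matrix (Fin d) (Fin d) ℂ).map star) *
              Matrix.vecMulVec (psi d)
                (star ((Y ⊗ₖ (1 : Matrix (Fin d) (Fin d) ℂ)).mulVec (psi d))) *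
              ((U i : Matrix (Fin d) (Fin d) ℂ)ᴴ ⊗ₖ
                ((U i : Matrix (Fin d) (Fin d) ℂ).map star)ᴴ)
          - twirl11 d μ (Matrix.vecMulVec (psi d)
              (star ((Y ⊗ₖ (1 : Matrix (Fin d) (Fin d) ℂ)).mulVec (psi d))))) ≤ ε := by
  intro Y hnorm horth
  have hd : d ≠ 0 := by
    rintro rfl
    simp at hnorm
  have htrace : Y.trace = 0 := by
    simpa [star_psi_dotProduct_kronecker_one_mulVec_psi, hd] using horth
  have hfrob : (Yᴴ * Y).trace = d := by
    rw [sum_norm_sq_kronecker_one_mulVec_psi, inv_mul_eq_one₀ (Nat.cast_ne_zero.mpr hd)] at hnorm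
    rw [trace_conjTranspose_mul_self_eq_sum_norm_sq, ← hnorm, Complex.ofReal_natCast]
  rw [smul_sum_kronecker_map_star_conj_vecMulVec_psi, twirl11_vecMulVec_psi,
    unitaryTwirl_eq μ hinv, htrace, zero_div, zero_smul, zero_kronecker, zero_mulVec, star_zero,
    vecMulVec_zero, sub_zero]
  exact (traceNorm_vecMulVec_psi_le hd _).trans (happrox Y htrace hfrob)

theorem stmt_13 (d n : ℕ) (hd : 0 < d) (hn : 0 < n) (ε : ℝ) (hε : 0 ≤ ε)
    [MeasurableSpace (Matrix.unitaryGroup (Fin d) ℂ)]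
    [BorelSpace (Matrix.unitaryGroup (Fin d) ℂ)]
    -- μ is the Haar (i.e. the invariant probability) measure on U(d):
    (μ : Measure (Matrix.unitaryGroup (Fin d) ℂ)) [IsProbabilityMeasure μ]
    (hinv : ∀ V : Matrix.unitaryGroup (Fin d) ℂ, Measure.map (fun U => V * U) μ = μ)
    (U : Fin n → Matrix.unitaryGroup (Fin d) ℂ)
    -- the sampled unitaries approximate the `T^{(1)}` twirl on traceless
    -- matrices `Y` with `‖Y‖₂ = √d` (where `T^{(1)}(Y) = (Tr Y / d)·1 = 0`):
    (happrox : ∀ Y : Matrix (Fin d) (Fin d) ℂ, Y.trace = 0 → (Yᴴ * Y).trace = (d : ℂ) →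
      opNorm ((n : ℂ)⁻¹ • ∑ i, (U i : Matrix (Fin d) (Fin d) ℂ) * Y *
        (U i : Matrix (Fin d) (Fin d) ℂ)ᴴ) ≤ ε) :
    -- then for any unit vector `ψ' = (Y ⊗ 1)ψ` orthogonal to `ψ`:
    ∀ Y : Matrix (Fin d) (Fin d) ℂ,
      (∑ p, ‖(Y ⊗ₖ (1 : Matrix (Fin d) (Fin d) ℂ)).mulVec (psi d) p‖ ^ 2 = 1) →
      (star (psi d)) ⬝ᵥ (Y ⊗ₖ (1 : Matrix (Fin d) (Fin d) ℂ)).mulVec (psi d) = 0 →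
      traceNorm
        ((n : ℂ)⁻¹ • ∑ i,
            ((U i : Matrix (Fin d) (Fin d) ℂ) ⊗ₖ (U i : Matrix (Fin d) (Fin d) ℂ).map star) *
              Matrix.vecMulVec (psi d)
                (star ((Y ⊗ₖ (1 : Matrix (Fin d) (Fin d) ℂ)).mulVec (psi d))) *
              ((U i : Matrix (Fin d) (Fin d) ℂ)ᴴ ⊗ₖ
                ((U i : Matrix (Fin d) (Fin d) ℂ).map star)ᴴ)
          - twirl11 d μ (Matrix.vecMulVec (psi d)
              (star ((Y ⊗ₖ (1 : Matrix (Fin d) (Fin d) ℂ)).mulVec (psi d))))) ≤ ε :=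
  stmt_13_general d n ε μ hinv U happrox
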